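/- Let k be a field, n ≥ 1 an integer, and g_n(t) = 2n·d(t) where d(t) is the distance from t to {k/n : k ∈ ℤ}. Let Q be the poset {(i,j) ∈ ℕ × ℕ : i ≤ j ≤ n} with (i,j) ⪯ (i',j') iff i' ≤ i and j ≤ j'. Define the functor N : Q ⥤ ModuleCat k by N(i,j) = the free k-module on the set of connected components of {t ∈ ℝ : i/n ≤ t ≤ j/n and g_n(t) ≤ 1/2}, with structure maps sending the basis element of a component to the basis element of the component containing it. Then N is isomorphic to the direct sum ⊕_{m=0}^{n} P_m, where P_m : Q ⥤ ModuleCat k is the functor with P_m(i,j) = k if i ≤ m ≤ j and P_m(i,j) = 0 otherwise, and with the identity map k → k whenever both values are k and the zero map otherwise. In particular N decomposes into n+1 summands, each pointwise of dimension at most one. -/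

import Mathlib

/-!
For `n ≥ 1`, `g_n t ≤ 1/2` says that `n t` lies within `1/4` of the integer `round (n t)`.
Hence `t ↦ round (n t)` is locally constant on `S(i/n, j/n, 1/2)`, its fibres there are
intervals, and its values are exactly `i, …, j` (taken at the points `m/n`): it labels the
connected components bijectively by `{i, …, j}`, compatibly with the inclusions. A natural
injective labelling of components by a finite set splits the free module on the components
into the sum over the labels `m` of the lines spanned by the component labelled `m`, and
these summands are the interval modules `P_m`.
-/

open CategoryTheory

noncomputable section

/-- The map induced on connected components by an inclusion of subspaces. -/
def compMap {Y : Type} [TopologicalSpace Y] {A B : Set Y} (h : A ⊆ B) :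
    ConnectedComponents A → ConnectedComponents B :=
  (continuous_inclusion h).connectedComponentsMap

lemma compMap_id {Y : Type} [TopologicalSpace Y] {A : Set Y} (h : A ⊆ A) :
    compMap h = id := by
  funext x
  obtain ⟨y, rfl⟩ := ConnectedComponents.surjective_coe x
  rfl

lemma compMap_comp {Y : Type} [TopologicalSpace Y] {A B C : Set Y}
    (hAB : A ⊆ B) (hBC : B ⊆ C) (hAC : A ⊆ C) :
    compMap hAC = compMap hBC ∘ compMap hAB := by
  funext x
  obtain ⟨y, rfl⟩ := ConnectedComponents.surjective_coe x
  rfl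

/-- The persistence module (valued in free `k`-modules on connected components)
associated to a monotone family of subspaces indexed by a poset. -/
def compFunctor (k : Type) [Field k] {α : Type} [Preorder α] {Y : Type} [TopologicalSpace Y]
    (A : α → Set Y) (mono : Monotone A) : α ⥤ ModuleCat k where
  obj p := ModuleCat.of k (ConnectedComponents (A p) →₀ k)
  map {p q} h := ModuleCat.ofHom (Finsupp.lmapDomain k k (compMap (mono (leOfHom h))))
  map_id p := by
    show ModuleCat.ofHom (Finsupp.lmapDomain k k _) = _
    rw [compMap_id]; exact congrArg ModuleCat.ofHom (Finsupp.lmapDomain_id _ _)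
  map_comp {p q r} f g := by
    show ModuleCat.ofHom (Finsupp.lmapDomain k k _) = _
    rw [compMap_comp (mono (leOfHom f)) (mono (leOfHom g))]
    exact congrArg ModuleCat.ofHom (Finsupp.lmapDomain_comp _ _ _ _)

/-- The sublevel set `S(a,b,c) = {t ∈ ℝ : a ≤ t ≤ b and g t ≤ c}`. -/
def Slev (g : ℝ → ℝ) (a b c : ℝ) : Set ℝ := {t : ℝ | a ≤ t ∧ t ≤ b ∧ g t ≤ c}

/-- `g_n(t) = 2n·d(t)` where `d(t)` is the distance from `t` to the set
`{k/n : k ∈ ℤ}`. -/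
def gfun (n : ℕ) (t : ℝ) : ℝ := 2 * n * Metric.infDist t {x : ℝ | ∃ k : ℤ, x = k / n}

/-- The poset `Q = {(i,j) ∈ ℕ × ℕ : i ≤ j ≤ n}` with `(i,j) ⪯ (i',j')` iff
`i' ≤ i` and `j ≤ j'`. -/
def QQ (n : ℕ) : Type := {ij : ℕ × ℕ // ij.1 ≤ ij.2 ∧ ij.2 ≤ n}

namespace QQ

variable {n : ℕ}

instance : PartialOrder (QQ n) where
  le x y := y.1.1 ≤ x.1.1 ∧ x.1.2 ≤ y.1.2
  le_refl x := ⟨le_refl _, le_refl _⟩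
  le_trans x y z h h' := ⟨h'.1.trans h.1, h.2.trans h'.2⟩
  le_antisymm x y h h' :=
    Subtype.ext (Prod.ext (le_antisymm h'.1 h.1) (le_antisymm h.2 h'.2))

/-- The first coordinate `i`. -/
def i (q : QQ n) : ℕ := q.1.1
/-- The second coordinate `j`. -/
def j (q : QQ n) : ℕ := q.1.2

end QQ

lemma SlevQ_mono (n : ℕ) :
    Monotone (fun q : QQ n => Slev (gfun n) ((q.i : ℝ) / n) ((q.j : ℝ) / n) (1 / 2)) := by
  intro q q' h t ht
  have hn : (0 : ℝ) ≤ n := Nat.cast_nonneg n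
  refine ⟨le_trans ?_ ht.1, le_trans ht.2.1 ?_, ht.2.2⟩
  · exact div_le_div_of_nonneg_right (by exact_mod_cast h.1) hn
  · exact div_le_div_of_nonneg_right (by exact_mod_cast h.2) hn

/-- The persistence module `N : Q ⥤ ModuleCat k`, assigning to `(i,j)` the free
`k`-module on the set of connected components of `S(i/n, j/n, 1/2)` for the function
`g_n`. -/
def Nfunctor (k : Type) [Field k] (n : ℕ) : QQ n ⥤ ModuleCat k :=
  compFunctor k (fun q : QQ n => Slev (gfun n) ((q.i : ℝ) / n) ((q.j : ℝ) / n) (1 / 2))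
    (SlevQ_mono n)

/-- The interval module `P_m : Q ⥤ ModuleCat k`:  its value at `(i,j)` is the free
`k`-module on a one-element type if `i ≤ m ≤ j` (hence isomorphic to `k`) and the free
`k`-module on the empty type (hence `0`) otherwise, and its structure maps send a basis
element to the corresponding basis element (the identity `k → k`) whenever both values
are nonzero, and are zero otherwise. -/
def Pm (k : Type) [Field k] (n m : ℕ) : QQ n ⥤ ModuleCat k where
  obj q := ModuleCat.of k (PLift (q.i ≤ m ∧ m ≤ q.j) →₀ k)
  map {q q'} h := ModuleCat.ofHom (Finsupp.lmapDomain k k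
    (fun hp => PLift.up ⟨le_trans (leOfHom h).1 hp.down.1, hp.down.2.trans (leOfHom h).2⟩))
  map_id q := by
    show ModuleCat.ofHom (Finsupp.lmapDomain k k _) = _
    rw [show (fun hp : PLift (q.i ≤ m ∧ m ≤ q.j) =>
        PLift.up (⟨le_trans (leOfHom (𝟙 q)).1 hp.down.1, hp.down.2.trans (leOfHom (𝟙 q)).2⟩ :
          q.i ≤ m ∧ m ≤ q.j)) = id from funext fun _ => Subsingleton.elim _ _]
    exact congrArg ModuleCat.ofHom (Finsupp.lmapDomain_id _ _)
  map_comp {q q' q''} f g := by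
    show ModuleCat.ofHom (Finsupp.lmapDomain k k _) = _
    rw [show (fun hp : PLift (q.i ≤ m ∧ m ≤ q.j) =>
        (PLift.up ⟨le_trans (leOfHom (f ≫ g)).1 hp.down.1,
          hp.down.2.trans (leOfHom (f ≫ g)).2⟩ : PLift (q''.i ≤ m ∧ m ≤ q''.j))) =
        (fun hp : PLift (q'.i ≤ m ∧ m ≤ q'.j) =>
          (PLift.up ⟨le_trans (leOfHom g).1 hp.down.1, hp.down.2.trans (leOfHom g).2⟩ :
            PLift (q''.i ≤ m ∧ m ≤ q''.j))) ∘
        (fun hp : PLift (q.i ≤ m ∧ m ≤ q.j) =>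
          (PLift.up ⟨le_trans (leOfHom f).1 hp.down.1, hp.down.2.trans (leOfHom f).2⟩ :
            PLift (q'.i ≤ m ∧ m ≤ q'.j))) from funext fun _ => Subsingleton.elim _ _]
    exact congrArg ModuleCat.ofHom (Finsupp.lmapDomain_comp _ _ _ _)

end

attribute [local instance] CategoryTheory.Abelian.hasFiniteBiproducts

theorem Continuous.connectedComponentsLift_injective {X β : Type*} [TopologicalSpace X]
    [TopologicalSpace β] [TotallyDisconnectedSpace β] {f : X → β} (hf : Continuous f)
    (hfib : ∀ b, IsPreconnected (f ⁻¹' {b})) :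
    Function.Injective hf.connectedComponentsLift := by
  intro c c' h
  obtain ⟨x, rfl⟩ := ConnectedComponents.surjective_coe c
  obtain ⟨y, rfl⟩ := ConnectedComponents.surjective_coe c'
  rw [hf.connectedComponentsLift_apply_coe, hf.connectedComponentsLift_apply_coe] at h
  exact ConnectedComponents.coe_eq_coe'.2 ((hfib (f y)).subset_connectedComponent rfl h)

theorem Finsupp.comapDomain_mapDomain_eq_mapDomain_comapDomain {α β γ δ M : Type*}
    [AddCommMonoid M] {f : α → β} {g : γ → δ} {u : γ → α} {v : δ → β}
    (hf : Function.Injective f) (hg : Function.Injective g) (hu : Function.Injective u)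
    (hv : Function.Injective v) (hcomm : ∀ y, f (u y) = v (g y))
    (hpullback : ∀ c x, f c = v x → c ∈ Set.range u) (l : α →₀ M) :
    comapDomain v (mapDomain f l) hv.injOn = mapDomain g (comapDomain u l hu.injOn) := by
  ext x
  rw [comapDomain_apply]
  by_cases hx : x ∈ Set.range g
  · obtain ⟨y, rfl⟩ := hx
    rw [← hcomm, mapDomain_apply hf, mapDomain_apply hg, comapDomain_apply]
  · rw [mapDomain_of_notMem_range _ _ hx, mapDomain_of_notMem_range]
    rintro ⟨c, hc⟩
    obtain ⟨y, rfl⟩ := hpullback c x hc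
    exact hx ⟨y, hv ((hcomm y).symm.trans hc)⟩

noncomputable section

open Limits

variable (k : Type) [Field k] {α : Type} [Preorder α]

def indicatorFunctor (p : α → Prop) (hp : Monotone p) : α ⥤ ModuleCat k where
  obj a := ModuleCat.of k (PLift (p a) →₀ k)
  map h := ModuleCat.ofHom (Finsupp.lmapDomain k k fun x => PLift.up (hp (leOfHom h) x.down))
  map_id _ := congrArg ModuleCat.ofHom (Finsupp.lmapDomain_id k k)
  map_comp f g := congrArg ModuleCat.ofHom (Finsupp.lmapDomain_comp k k
    (fun x => PLift.up (hp (leOfHom f) x.down)) (fun x => PLift.up (hp (leOfHom g) x.down)))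

theorem finrank_indicatorFunctor_obj_le_one (p : α → Prop) (hp : Monotone p) (a : α) :
    Module.finrank k ((indicatorFunctor k p hp).obj a) ≤ 1 := by
  classical
  change Module.finrank k (PLift (p a) →₀ k) ≤ 1
  rw [Module.finrank_finsupp_self]
  exact Fintype.card_le_one_iff_subsingleton.2 inferInstance

structure ComponentLabelling {Y : Type} [TopologicalSpace Y] (A : α → Set Y) (mono : Monotone A)
    (ι : Type) (p : ι → α → Prop) where
  label : ∀ a, ConnectedComponents (A a) → ι
  label_compMap {a b : α} (h : a ≤ b) (c : ConnectedComponents (A a)) :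
    label b (compMap (mono h) c) = label a c
  label_injective (a : α) : Function.Injective (label a)
  mem_range_label (m : ι) (a : α) : m ∈ Set.range (label a) ↔ p m a

namespace ComponentLabelling

variable {k} {Y : Type} [TopologicalSpace Y] {A : α → Set Y} {mono : Monotone A} {ι : Type}
  {p : ι → α → Prop} (L : ComponentLabelling A mono ι p)

theorem monotone (L : ComponentLabelling A mono ι p) (m : ι) : Monotone (p m) := by
  intro a b h hm
  obtain ⟨c, hc⟩ := (L.mem_range_label m a).2 hm
  exact (L.mem_range_label m b).1 ⟨compMap (mono h) c, (L.label_compMap h c).trans hc⟩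

theorem compMap_injective (L : ComponentLabelling A mono ι p) {a b : α} (h : a ≤ b) :
    Function.Injective (compMap (mono h)) :=
  fun c c' hc => L.label_injective a <| by rw [← L.label_compMap h, hc, L.label_compMap h]

def component (m : ι) (a : α) (x : PLift (p m a)) : ConnectedComponents (A a) :=
  ((L.mem_range_label m a).2 x.down).choose

theorem label_component {m : ι} {a : α} (x : PLift (p m a)) : L.label a (L.component m a x) = m :=
  ((L.mem_range_label m a).2 x.down).choose_spec

theorem component_injective (m : ι) (a : α) : Function.Injective (L.component m a) :=
  fun _ _ _ => Subsingleton.elim _ _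

theorem mem_range_component {m : ι} {a : α} {c : ConnectedComponents (A a)} :
    c ∈ Set.range (L.component m a) ↔ L.label a c = m := by
  refine ⟨fun ⟨x, hx⟩ => hx ▸ L.label_component x, fun hc => ?_⟩
  have hm : p m a := (L.mem_range_label m a).1 ⟨c, hc⟩
  exact ⟨⟨hm⟩, L.label_injective a ((L.label_component _).trans hc.symm)⟩

theorem compMap_component {m : ι} {a b : α} (h : a ≤ b) (x : PLift (p m a)) :
    compMap (mono h) (L.component m a x) = L.component m b ⟨L.monotone m h x.down⟩ :=
  L.label_injective b <| by rw [L.label_compMap h, L.label_component, L.label_component]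

variable (k)

def proj (m : ι) : compFunctor k A mono ⟶ indicatorFunctor k (p m) (L.monotone m) where
  app a := ModuleCat.ofHom (Finsupp.lcomapDomain _ (L.component_injective m a))
  naturality a b h := by
    have hab := leOfHom h
    refine ModuleCat.hom_ext (LinearMap.ext fun l =>
      Finsupp.comapDomain_mapDomain_eq_mapDomain_comapDomain (L.compMap_injective hab)
        (fun _ _ _ => Subsingleton.elim _ _) (L.component_injective m a)
        (L.component_injective m b) (L.compMap_component hab) (fun c x hc => ?_) l)
    exact L.mem_range_component.2 (by rw [← L.label_compMap hab, hc, L.label_component])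

def incl (m : ι) : indicatorFunctor k (p m) (L.monotone m) ⟶ compFunctor k A mono where
  app a := ModuleCat.ofHom (Finsupp.lmapDomain k k (L.component m a))
  naturality a b h := by
    simp only [compFunctor, indicatorFunctor, ← ModuleCat.ofHom_comp, ← Finsupp.lmapDomain_comp]
    congr 2
    funext x
    exact (L.compMap_component (leOfHom h) x).symm

theorem incl_proj (m : ι) : L.incl k m ≫ L.proj k m = 𝟙 _ := by
  ext a l : 4
  exact Finsupp.comapDomain_mapDomain _ (L.component_injective m a) l

theorem incl_proj_of_ne {m m' : ι} (h : m ≠ m') : L.incl k m ≫ L.proj k m' = 0 := by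
  ext a l : 4
  refine Finsupp.ext fun x => Finsupp.mapDomain_of_notMem_range (M := k) _ _ fun hx => h ?_
  rw [← L.mem_range_component.1 hx, L.label_component]

theorem sum_mapDomain_comapDomain_component [Fintype ι] (a : α) :
    ∑ m, Finsupp.lmapDomain k k (L.component m a) ∘ₗ
      Finsupp.lcomapDomain (L.component m a) (L.component_injective m a) = LinearMap.id := by
  refine LinearMap.ext fun l => Finsupp.ext fun c => ?_
  rw [LinearMap.sum_apply, Finsupp.finsetSum_apply, Finset.sum_eq_single (L.label a c)
    (fun m _ hm => ?_) (fun h => absurd (Finset.mem_univ _) h)]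
  · obtain ⟨x, hx⟩ := L.mem_range_component.2 (rfl : L.label a c = L.label a c)
    have key := Finsupp.mapDomain_apply (L.component_injective _ a)
      (Finsupp.comapDomain _ l (L.component_injective _ a).injOn) x
    rw [Finsupp.comapDomain_apply, hx] at key
    exact key
  · exact Finsupp.mapDomain_of_notMem_range _ _ fun hc => hm (L.mem_range_component.1 hc).symm

theorem sum_proj_incl [Fintype ι] : ∑ m, L.proj k m ≫ L.incl k m = 𝟙 _ := by
  ext a : 2
  rw [NatTrans.app_sum]
  exact ModuleCat.hom_ext
    ((ModuleCat.hom_sum _ _).trans (L.sum_mapDomain_comapDomain_component k a))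

def bicone : Bicone fun m => indicatorFunctor k (p m) (L.monotone m) where
  pt := compFunctor k A mono
  π := L.proj k
  ι := L.incl k
  ι_π m m' := by
    split_ifs with h
    · subst h
      exact L.incl_proj k m
    · exact L.incl_proj_of_ne k h

def isoBiproduct [Fintype ι] :
    compFunctor k A mono ≅ ⨁ fun m => indicatorFunctor k (p m) (L.monotone m) :=
  biproduct.uniqueUpToIso _ (isBilimitOfTotal (L.bicone k) (L.sum_proj_incl k))

end ComponentLabelling

end

theorem round_eq_round_of_abs_sub_round_le {R : Type*} [Field R] [LinearOrder R]
    [IsStrictOrderedRing R] [FloorRing R] {u v : R} (hu : |u - round u| ≤ 1 / 4)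
    (hv : |v - round v| ≤ 1 / 4) (huv : |u - v| < 1 / 2) : round u = round v := by
  have h : |((round u - round v : ℤ) : R)| < 1 := by
    push_cast
    rw [abs_le] at hu hv
    rw [abs_lt] at huv ⊢
    constructor <;> linarith
  exact sub_eq_zero.1 (Int.abs_lt_one_iff.1 (by exact_mod_cast h))

noncomputable section

open Set

variable {n : ℕ}

theorem gfun_eq (hn : 0 < n) (t : ℝ) : gfun n t = 2 * |n * t - round (n * t)| := by
  have hn' : (0 : ℝ) < n := Nat.cast_pos.2 hn
  have hdist (z : ℤ) : dist t (z / n) = |n * t - z| / n := by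
    rw [Real.dist_eq, ← abs_of_pos hn', ← abs_div, abs_of_pos hn']
    congr 1
    field_simp
  have hinf :
      Metric.infDist t {x : ℝ | ∃ z : ℤ, x = z / n} = |n * t - round (n * t)| / n := by
    refine le_antisymm ?_ ?_
    · rw [← hdist]
      exact Metric.infDist_le_dist_of_mem (mem_ofPred.2 ⟨round (n * t), rfl⟩)
    · refine (Metric.le_infDist ⟨0, mem_ofPred.2 ⟨0, by simp⟩⟩).2 fun y ⟨z, hz⟩ => ?_
      rw [hz, hdist]
      exact div_le_div_of_nonneg_right (round_le _ z) hn'.le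
  rw [gfun, hinf]
  field_simp

theorem mem_Slev_gfun_iff (hn : 0 < n) {a b t : ℝ} :
    t ∈ Slev (gfun n) a b (1 / 2) ↔
      a ≤ t ∧ t ≤ b ∧ |n * t - round (n * t)| ≤ 1 / 4 := by
  simp only [Slev, mem_ofPred_eq, gfun_eq hn]
  constructor <;> rintro ⟨h₁, h₂, h₃⟩ <;> exact ⟨h₁, h₂, by linarith⟩

theorem continuous_round_mul_Slev_gfun (hn : 0 < n) (a b : ℝ) :
    Continuous fun t : Slev (gfun n) a b (1 / 2) => round (n * (t : ℝ)) := by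
  have hn' : (0 : ℝ) < n := Nat.cast_pos.2 hn
  refine IsLocallyConstant.continuous (IsLocallyConstant.iff_exists_open _ |>.2 fun x => ?_)
  refine ⟨Metric.ball x (2 * (n : ℝ))⁻¹, Metric.isOpen_ball,
    Metric.mem_ball_self (by positivity), fun y hy => ?_⟩
  refine round_eq_round_of_abs_sub_round_le ((mem_Slev_gfun_iff hn).1 y.2).2.2
    ((mem_Slev_gfun_iff hn).1 x.2).2.2 ?_
  rw [Metric.mem_ball, Subtype.dist_eq, Real.dist_eq] at hy
  calc |n * (y : ℝ) - n * x| = n * |(y : ℝ) - x| := by rw [← mul_sub, abs_mul, abs_of_pos hn']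
    _ < n * (2 * (n : ℝ))⁻¹ := mul_lt_mul_of_pos_left hy hn'
    _ = 1 / 2 := by field_simp

theorem isPreconnected_round_mul_Slev_gfun_fiber (hn : 0 < n) (a b : ℝ) (m : ℤ) :
    _root_.IsPreconnected
      ((fun t : Slev (gfun n) a b (1 / 2) => round (n * (t : ℝ))) ⁻¹' {m}) := by
  have hn' : (0 : ℝ) < n := Nat.cast_pos.2 hn
  rw [← Topology.IsInducing.subtypeVal.isPreconnected_image]
  have himage : (↑) '' ((fun t : Slev (gfun n) a b (1 / 2) => round (n * (t : ℝ))) ⁻¹' {m}) =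
      Icc a b ∩ (fun t => n * t) ⁻¹' Icc (m - 1 / 4) (m + 1 / 4) := by
    ext t
    simp only [mem_image, mem_preimage, mem_singleton_iff, Subtype.exists, exists_and_right,
      exists_eq_right, mem_inter_iff, mem_Icc, mem_Slev_gfun_iff hn]
    constructor
    · rintro ⟨⟨h₁, h₂, h₃⟩, rfl⟩
      rw [abs_le] at h₃
      exact ⟨⟨h₁, h₂⟩, by linarith, by linarith⟩
    · rintro ⟨⟨h₁, h₂⟩, h₃, h₄⟩
      have hround : round (n * t) = m := round_eq_iff.2 ⟨by linarith, by linarith⟩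
      refine ⟨⟨h₁, h₂, ?_⟩, hround⟩
      rw [hround, abs_le]
      exact ⟨by linarith, by linarith⟩
  rw [himage]
  exact (ordConnected_Icc.inter
    (ordConnected_Icc.preimage_mono (monotone_mul_left_of_nonneg hn'.le))).isPreconnected

def roundIndex (hn : 0 < n) (a b : ℝ) :
    _root_.ConnectedComponents (Slev (gfun n) a b (1 / 2)) → ℤ :=
  (continuous_round_mul_Slev_gfun hn a b).connectedComponentsLift

theorem roundIndex_coe (hn : 0 < n) {a b : ℝ} (t : Slev (gfun n) a b (1 / 2)) :
    roundIndex hn a b t = round (n * (t : ℝ)) :=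
  Continuous.connectedComponentsLift_apply_coe _ t

theorem roundIndex_injective (hn : 0 < n) (a b : ℝ) : Function.Injective (roundIndex hn a b) :=
  (continuous_round_mul_Slev_gfun hn a b).connectedComponentsLift_injective
    (isPreconnected_round_mul_Slev_gfun_fiber hn a b)

theorem round_mul_mem_Icc (hn : 0 < n) {i j : ℕ} {t : ℝ}
    (ht : t ∈ Slev (gfun n) ((i : ℝ) / n) ((j : ℝ) / n) (1 / 2)) :
    (i : ℤ) ≤ round (n * t) ∧ round (n * t) ≤ j := by
  have hn' : (0 : ℝ) < n := Nat.cast_pos.2 hn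
  obtain ⟨hi, hj, hround⟩ := (mem_Slev_gfun_iff hn).1 ht
  rw [div_le_iff₀' hn'] at hi
  rw [le_div_iff₀' hn'] at hj
  rw [abs_le] at hround
  have hi' : (i : ℝ) < round (n * t) + 1 := by linarith
  have hj' : (round (n * t) : ℝ) < j + 1 := by linarith
  exact ⟨Int.lt_add_one_iff.1 (by exact_mod_cast hi'),
    Int.lt_add_one_iff.1 (by exact_mod_cast hj')⟩

theorem natCast_div_mem_Slev_gfun (hn : 0 < n) {i j m : ℕ} (hm : i ≤ m ∧ m ≤ j) :
    (m : ℝ) / n ∈ Slev (gfun n) ((i : ℝ) / n) ((j : ℝ) / n) (1 / 2) := by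
  have hn' : (0 : ℝ) < n := Nat.cast_pos.2 hn
  rw [mem_Slev_gfun_iff hn, mul_div_cancel₀ _ hn'.ne', round_natCast]
  refine ⟨?_, ?_, by norm_num⟩ <;> gcongr <;> exact_mod_cast (by omega)

theorem roundIndex_mem_Icc (hn : 0 < n) {i j : ℕ}
    (c : _root_.ConnectedComponents (Slev (gfun n) ((i : ℝ) / n) ((j : ℝ) / n) (1 / 2))) :
    (i : ℤ) ≤ roundIndex hn _ _ c ∧ roundIndex hn _ _ c ≤ j := by
  obtain ⟨t, rfl⟩ := ConnectedComponents.surjective_coe c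
  rw [roundIndex_coe]
  exact round_mul_mem_Icc hn t.2

def sublevelLabelling (hn : 0 < n) :
    ComponentLabelling (fun q : QQ n => Slev (gfun n) ((q.i : ℝ) / n) ((q.j : ℝ) / n) (1 / 2))
      (SlevQ_mono n) (Fin (n + 1)) (fun m q => q.i ≤ (m : ℕ) ∧ (m : ℕ) ≤ q.j) where
  label q c := ⟨(roundIndex hn _ _ c).toNat, by
    have := roundIndex_mem_Icc hn c
    have : q.j ≤ n := q.2.2
    omega⟩
  label_compMap h c := by
    obtain ⟨t, rfl⟩ := ConnectedComponents.surjective_coe c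
    rfl
  label_injective q c c' h := by
    have h : (roundIndex hn _ _ c).toNat = (roundIndex hn _ _ c').toNat := Fin.val_eq_of_eq h
    have := roundIndex_mem_Icc hn c
    have := roundIndex_mem_Icc hn c'
    exact roundIndex_injective hn _ _ (by omega)
  mem_range_label m q := by
    constructor
    · rintro ⟨c, rfl⟩
      have := roundIndex_mem_Icc hn c
      change q.i ≤ (roundIndex hn _ _ c).toNat ∧ (roundIndex hn _ _ c).toNat ≤ q.j
      omega
    · intro hm
      refine ⟨(⟨_, natCast_div_mem_Slev_gfun hn hm⟩ : Slev _ _ _ _), Fin.ext ?_⟩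
      change (roundIndex hn _ _ _).toNat = (m : ℕ)
      rw [roundIndex_coe, mul_div_cancel₀ _ (Nat.cast_ne_zero.2 hn.ne'), round_natCast]
      simp

end

open CategoryTheory.Limits in
/-- **Decomposition of the two-parameter persistence module of `g_n` at level `1/2`**
(Section `sec:arb-dim`).  The functor `N : Q ⥤ ModuleCat k` is isomorphic to the direct
sum `⊕_{m=0}^{n} P_m` of the interval modules `P_m`; in particular `N` decomposes into
`n+1` summands, each pointwise of dimension at most one. -/
theorem Nfunctor_decomposition (k : Type) [Field k] (n : ℕ) (hn : 1 ≤ n) :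
    Nonempty (Nfunctor k n ≅ ⨁ fun m : Fin (n + 1) => Pm k n (m : ℕ)) ∧
    (∀ (m : Fin (n + 1)) (q : QQ n), Module.finrank k ((Pm k n (m : ℕ)).obj q) ≤ 1) :=
  -- `Pm k n m` is definitionally `indicatorFunctor k (fun q => q.i ≤ m ∧ m ≤ q.j) _`.
  ⟨⟨(sublevelLabelling hn).isoBiproduct k⟩,
    fun _ _ => finrank_indicatorFunctor_obj_le_one k _ ((sublevelLabelling hn).monotone _) _⟩
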